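/- Let G be a Fischer space of symplectic type, ℓ = {a,b,c} a line contained in two distinct complete quadrilaterals π (with extra points x,y,z, where lines are {a,y,z},{b,x,z},{c,x,y}) and π' (with extra points p,q,r, lines {a,q,r},{b,p,r},{c,p,q}). If p ∼ x, then p ≁ y, p ≁ z, q ∼ y, q ≁ x, q ≁ z, r ∼ z, r ≁ x, r ≁ y, and the three points p∧x, q∧y, r∧z coincide in a single point w which is not collinear with any of a, b, c. -/

import Mathlib

/-!
Everything comes from the complete quadrilateral spanned by two intersecting lines: a point
collinear with one point of a line, and off it, is collinear with exactly one of the other two,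
and a point collinear with no two points of a line is collinear with none of them. For `p ∼ x`,
the quadrilateral spanned by `{c, x, y}` and `{c, p, q}` forces `q ∼ y` and `p ∧ x = q ∧ y`,
and the one spanned by `{b, x, z}` and `{b, p, r}` forces `r ∼ z` and `p ∧ x = r ∧ z`. Finally
`w = p ∧ x` lies on the line `{p, x, w}`, with which `a` shares no collinearity while `b` and `c`
are collinear with both `p` and `x`; so none of `a, b, c` is collinear with `w`.
-/

/-- A partial triple system, given by a collinearity relation `col` and a map `third`
sending two distinct collinear points to the third point on their line. -/
structure IsPTS {P : Type*} (col : P → P → Prop) (third : P → P → P) : Prop where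
  symm : ∀ x y, col x y → col y x
  irrefl : ∀ x, ¬ col x x
  third_symm : ∀ x y, col x y → third x y = third y x
  col_third : ∀ x y, col x y → col x (third x y)
  third_ne_left : ∀ x y, col x y → third x y ≠ x
  third_ne_right : ∀ x y, col x y → third x y ≠ y
  third_third : ∀ x y, col x y → third x (third x y) = y
  unique_line : ∀ x y u v, col x y → col u v →
    x ∈ ({u, v, third u v} : Set P) → y ∈ ({u, v, third u v} : Set P) →
    ({x, y, third x y} : Set P) = {u, v, third u v}

/-- A subspace of a partial triple system: a set of points closed under taking
the third point of a line through two of its points. -/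
def IsSubspace {P : Type*} (col : P → P → Prop) (third : P → P → P) (S : Set P) : Prop :=
  ∀ x ∈ S, ∀ y ∈ S, col x y → third x y ∈ S

/-- The subspace generated by a set of points. -/
def fclosure {P : Type*} (col : P → P → Prop) (third : P → P → P) (T : Set P) : Set P :=
  ⋂₀ {S | T ⊆ S ∧ IsSubspace col third S}

/-- The line through two distinct collinear points, as a set. -/
def lineSet {P : Type*} (third : P → P → P) (x y : P) : Set P := {x, y, third x y}

/-- The six points of the complete quadrilateral (dual affine plane of order 2). -/
inductive CQPt | A | B | C | X | Y | Z
deriving DecidableEq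

/-- The "opposite point" involution of the complete quadrilateral. -/
def CQPt.opp : CQPt → CQPt
  | .A => .X | .X => .A | .B => .Y | .Y => .B | .C => .Z | .Z => .C

/-- Collinearity in the complete quadrilateral with lines
{A,B,C}, {A,Y,Z}, {B,X,Z}, {C,X,Y}: two points are collinear iff they are
distinct and not opposite. -/
def CQPt.col (p q : CQPt) : Prop := p ≠ q ∧ q ≠ p.opp

/-- The third point on the line through two distinct collinear points of the
complete quadrilateral. -/
def CQPt.third : CQPt → CQPt → CQPt
  | .A, .B => .C | .B, .A => .C | .A, .C => .B | .C, .A => .B | .B, .C => .A | .C, .B => .A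
  | .A, .Y => .Z | .Y, .A => .Z | .A, .Z => .Y | .Z, .A => .Y | .Y, .Z => .A | .Z, .Y => .A
  | .B, .X => .Z | .X, .B => .Z | .B, .Z => .X | .Z, .B => .X | .X, .Z => .B | .Z, .X => .B
  | .C, .X => .Y | .X, .C => .Y | .C, .Y => .X | .Y, .C => .X | .X, .Y => .C | .Y, .X => .C
  | p, _ => p

/-- A set of points is a complete quadrilateral if it is the isomorphic image of
the standard one (preserving collinearity and the `third` operation). -/
def IsCQSet {P : Type*} (col : P → P → Prop) (third : P → P → P) (S : Set P) : Prop :=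
  ∃ f : CQPt → P, Function.Injective f ∧ Set.range f = S ∧
    (∀ u v, col (f u) (f v) ↔ CQPt.col u v) ∧
    (∀ u v, CQPt.col u v → f (CQPt.third u v) = third (f u) (f v))

/-- A set of points is an affine plane of order 3 if it is the isomorphic image of
`AG(2,3)` (any two distinct points collinear, third point `-(u+v)`). -/
def IsAPSet {P : Type*} (col : P → P → Prop) (third : P → P → P) (S : Set P) : Prop :=
  ∃ f : ZMod 3 × ZMod 3 → P, Function.Injective f ∧ Set.range f = S ∧
    (∀ u v, col (f u) (f v) ↔ u ≠ v) ∧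
    (∀ u v, u ≠ v → f (-(u + v)) = third (f u) (f v))

/-- A Fischer space: a partial triple system in which the subspace generated by two
distinct intersecting lines is a complete quadrilateral or an affine plane of order 3. -/
structure IsFischer {P : Type*} (col : P → P → Prop) (third : P → P → P)
    extends IsPTS col third : Prop where
  dichotomy : ∀ x y u v, col x y → col u v →
    lineSet third x y ≠ lineSet third u v →
    (lineSet third x y ∩ lineSet third u v).Nonempty →
    IsCQSet col third (fclosure col third (lineSet third x y ∪ lineSet third u v)) ∨
    IsAPSet col third (fclosure col third (lineSet third x y ∪ lineSet third u v))

/-- A Fischer space of symplectic type: the subspace generated by two distinct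
intersecting lines is always a complete quadrilateral. -/
structure IsSymplectic {P : Type*} (col : P → P → Prop) (third : P → P → P)
    extends IsPTS col third : Prop where
  cq : ∀ x y u v, col x y → col u v →
    lineSet third x y ≠ lineSet third u v →
    (lineSet third x y ∩ lineSet third u v).Nonempty →
    IsCQSet col third (fclosure col third (lineSet third x y ∪ lineSet third u v))

/-- The six points `a,b,c,x,y,z` form a complete quadrilateral with lines
{a,b,c}, {a,y,z}, {b,x,z}, {c,x,y}. -/
def IsCQThrough {P : Type*} (col : P → P → Prop) (third : P → P → P)
    (a b c x y z : P) : Prop :=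
  [a, b, c, x, y, z].Pairwise (· ≠ ·) ∧
  col a b ∧ third a b = c ∧
  col a y ∧ third a y = z ∧
  col b x ∧ third b x = z ∧
  col c x ∧ third c x = y ∧
  ¬ col a x ∧ ¬ col b y ∧ ¬ col c z

instance : Fintype CQPt where
  elems := ⟨[CQPt.A, CQPt.B, CQPt.C, CQPt.X, CQPt.Y, CQPt.Z], by decide⟩
  complete := fun s => by cases s <;> decide

instance (s t : CQPt) : Decidable (CQPt.col s t) :=
  inferInstanceAs (Decidable (s ≠ t ∧ t ≠ s.opp))

theorem CQPt.col_iff_not_col_third : ∀ s t u : CQPt, s.col t → u.col s → u ≠ s.third t →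
    (u.col t ↔ ¬ u.col (s.third t)) := by
  decide

theorem CQPt.col_third_and_third_eq : ∀ s t u : CQPt, s.col t → s.col u → t.col u →
    t ≠ s.third u → (s.third t).col (s.third u) ∧ t.third u = (s.third t).third (s.third u) := by
  decide

theorem subset_fclosure {P : Type*} {col : P → P → Prop} {third : P → P → P} (T : Set P) :
    T ⊆ fclosure col third T :=
  fun _ hx => Set.mem_sInter.2 fun _ hT => hT.1 hx

namespace IsPTS

variable {P : Type*} {col : P → P → Prop} {third : P → P → P}

theorem ne_of_col (hP : IsPTS col third) {x y : P} (h : col x y) : x ≠ y :=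
  fun e => hP.irrefl y (e ▸ h)

theorem third_col (hP : IsPTS col third) {x y : P} (h : col x y) : col (third x y) x :=
  hP.symm _ _ (hP.col_third x y h)

theorem third_third_left (hP : IsPTS col third) {x y : P} (h : col x y) :
    third (third x y) x = y := by
  rw [hP.third_symm _ _ (hP.third_col h), hP.third_third x y h]

end IsPTS

namespace IsSymplectic

variable {P : Type*} {col : P → P → Prop} {third : P → P → P}

theorem exists_cqPt_embedding (hS : IsSymplectic col third) {u v w : P} (huv : col u v)
    (huw : col u w) (hw : w ∉ lineSet third u v) :
    ∃ f : CQPt → P, (∀ s t, col (f s) (f t) ↔ s.col t) ∧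
      (∀ s t, s.col t → f (s.third t) = third (f s) (f t)) ∧
      u ∈ Set.range f ∧ v ∈ Set.range f ∧ w ∈ Set.range f := by
  have hne : lineSet third u v ≠ lineSet third u w := fun h =>
    hw (h ▸ by simp [lineSet])
  obtain ⟨f, -, hrange, hcol, hthird⟩ :=
    hS.cq u v u w huv huw hne ⟨u, by simp [lineSet], by simp [lineSet]⟩
  have hsub : lineSet third u v ∪ lineSet third u w ⊆ Set.range f :=
    hrange ▸ subset_fclosure _
  exact ⟨f, hcol, hthird, hsub (by simp [lineSet]), hsub (by simp [lineSet]),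
    hsub (by simp [lineSet])⟩

theorem col_iff_not_col_third (hS : IsSymplectic col third) {u v w : P} (huv : col u v)
    (hwu : col w u) (hne : w ≠ third u v) : col w v ↔ ¬ col w (third u v) := by
  by_cases hwv : w = v
  · subst hwv
    simp [hS.irrefl, hS.third_symm _ _ huv, hS.col_third _ _ (hS.symm _ _ huv)]
  have hw : w ∉ lineSet third u v := by
    simp [lineSet, hS.ne_of_col hwu, hwv, hne]
  obtain ⟨f, hcol, hthird, ⟨s, rfl⟩, ⟨t, rfl⟩, ⟨r, rfl⟩⟩ :=
    hS.exists_cqPt_embedding huv (hS.symm _ _ hwu) hw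
  have hst : s.col t := (hcol s t).1 huv
  rw [← hthird s t hst] at hne ⊢
  rw [hcol, hcol]
  exact CQPt.col_iff_not_col_third s t r hst ((hcol r s).1 hwu) (fun h => hne (h ▸ rfl))

theorem not_col_third_of_col_of_col (hS : IsSymplectic col third) {u v w : P}
    (huv : col u v) (hwu : col w u) (hwv : col w v) (hne : third w u ≠ v) :
    ¬ col w (third u v) := by
  refine (hS.col_iff_not_col_third huv hwu fun h => hne ?_).1 hwv
  rw [h, hS.third_third_left huv]

theorem col_of_col_of_not_col (hS : IsSymplectic col third) {u v w : P} (huv : col u v)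
    (hwu : col w u) (hwv : ¬ col w v) (hne : w ≠ third u v) : col w (third u v) :=
  not_not.1 fun h => hwv ((hS.col_iff_not_col_third huv hwu hne).2 h)

theorem not_col_third_of_not_col (hS : IsSymplectic col third) {u v w : P} (huv : col u v)
    (hwu : ¬ col w u) (hwv : ¬ col w v) : ¬ col w (third u v) := by
  intro hwt
  have hwv' : w ≠ third (third u v) u := by
    rw [hS.third_third_left huv]
    exact fun h => hwu (h ▸ hS.symm _ _ huv)
  have := hS.col_of_col_of_not_col (hS.third_col huv) hwt hwu hwv'
  exact hwv (hS.third_third_left huv ▸ this)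

theorem col_third_and_third_eq (hS : IsSymplectic col third) {c x p : P} (hcx : col c x)
    (hcp : col c p) (hxp : col x p) (hne : x ≠ third c p) :
    col (third c x) (third c p) ∧ third x p = third (third c x) (third c p) := by
  have hx : x ∉ lineSet third c p := by
    simp [lineSet, (hS.ne_of_col hcx).symm, hS.ne_of_col hxp, hne]
  obtain ⟨f, hcol, hthird, ⟨s, rfl⟩, ⟨u, rfl⟩, ⟨t, rfl⟩⟩ :=
    hS.exists_cqPt_embedding hcp hcx hx
  have hst : s.col t := (hcol s t).1 hcx
  have hsu : s.col u := (hcol s u).1 hcp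
  have htu : t.col u := (hcol t u).1 hxp
  rw [← hthird s u hsu] at hne
  obtain ⟨hcol', heq⟩ := CQPt.col_third_and_third_eq s t u hst hsu htu fun h => hne (h ▸ rfl)
  rw [← hthird s t hst, ← hthird s u hsu, hcol, ← hthird t u htu, ← hthird _ _ hcol', heq]
  exact ⟨hcol', rfl⟩

theorem col_pairing_of_col (hS : IsSymplectic col third) {c x y p q : P} (hcx : col c x)
    (hy : third c x = y) (hcp : col c p) (hq : third c p = q) (hpx : col p x) (hxq : x ≠ q) :
    ¬ col p y ∧ ¬ col x q ∧ col q y ∧ third p x = third q y := by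
  subst hy hq
  have hpy : p ≠ third c x := fun h => hxq (by rw [h, hS.third_third c x hcx])
  obtain ⟨hyq, heq⟩ := hS.col_third_and_third_eq hcx hcp (hS.symm _ _ hpx) hxq
  refine ⟨hS.not_col_third_of_col_of_col hcx (hS.symm _ _ hcp) hpx ?_,
    hS.not_col_third_of_col_of_col hcp (hS.symm _ _ hcx) (hS.symm _ _ hpx) ?_,
    hS.symm _ _ hyq, ?_⟩
  · rw [hS.third_symm _ _ (hS.symm _ _ hcp)]
    exact hxq.symm
  · rw [hS.third_symm _ _ (hS.symm _ _ hcx)]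
    exact hpy.symm
  · rw [hS.third_symm _ _ hpx, heq, hS.third_symm _ _ hyq]

end IsSymplectic

theorem stmt15_general {P : Type*} (col : P → P → Prop) (third : P → P → P)
    (hS : IsSymplectic col third)
    (a b c x y z p q r : P)
    (hπ : IsCQThrough col third a b c x y z)
    (hπ' : IsCQThrough col third a b c p q r)
    (hpx : col p x) :
    (¬ col p y ∧ ¬ col p z ∧ ¬ col q x ∧ col q y ∧ ¬ col q z ∧
      ¬ col r x ∧ ¬ col r y ∧ col r z) ∧
    third p x = third q y ∧ third q y = third r z ∧
    ¬ col (third p x) a ∧ ¬ col (third p x) b ∧ ¬ col (third p x) c := by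
  obtain ⟨-, -, -, -, -, hbx, hbx3, hcx, hcx3, hax, -, -⟩ := hπ
  obtain ⟨-, -, -, -, -, hbp, hbp3, hcp, hcp3, hap, hbq, hcr⟩ := hπ'
  have hneq : x ≠ q := fun h => hbq (h ▸ hbx)
  have hner : x ≠ r := fun h => hcr (h ▸ hcx)
  obtain ⟨hpy, hxq, hqy, hwq⟩ := hS.col_pairing_of_col hcx hcx3 hcp hcp3 hpx hneq
  obtain ⟨hpz, hxr, hrz, hwr⟩ := hS.col_pairing_of_col hbx hbx3 hbp hbp3 hpx hner
  have hqz : ¬ col q z := hbx3 ▸ hS.not_col_third_of_not_col hbx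
    (mt (hS.symm _ _) hbq) (mt (hS.symm _ _) hxq)
  have hry : ¬ col r y := hcx3 ▸ hS.not_col_third_of_not_col hcx
    (mt (hS.symm _ _) hcr) (mt (hS.symm _ _) hxr)
  have hwa := hS.not_col_third_of_not_col hpx hap hax
  have hwb := hS.not_col_third_of_col_of_col hpx hbp hbx (hbp3 ▸ hner.symm)
  have hwc := hS.not_col_third_of_col_of_col hpx hcp hcx (hcp3 ▸ hneq.symm)
  exact ⟨⟨hpy, hpz, mt (hS.symm _ _) hxq, hqy, hqz, mt (hS.symm _ _) hxr, hry, hrz⟩,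
    hwq, hwq.symm.trans hwr, mt (hS.symm _ _) hwa, mt (hS.symm _ _) hwb, mt (hS.symm _ _) hwc⟩

/-- In a Fischer space of symplectic type, let ℓ = {a,b,c} be a line contained in two
distinct complete quadrilaterals π (extra points x,y,z) and π' (extra points p,q,r).
If `p ∼ x`, then the collinearities between {p,q,r} and {x,y,z} are exactly
p∼x, q∼y, r∼z, and `p∧x = q∧y = r∧z` is a single point `w` which is not collinear
with any of a, b, c. -/
theorem stmt15 {P : Type*} (col : P → P → Prop) (third : P → P → P)
    (hS : IsSymplectic col third)
    (a b c x y z p q r : P)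
    (hπ : IsCQThrough col third a b c x y z)
    (hπ' : IsCQThrough col third a b c p q r)
    (hdiff : ({x, y, z} : Set P) ≠ {p, q, r})
    (hpx : col p x) :
    (¬ col p y ∧ ¬ col p z ∧ ¬ col q x ∧ col q y ∧ ¬ col q z ∧
      ¬ col r x ∧ ¬ col r y ∧ col r z) ∧
    third p x = third q y ∧ third q y = third r z ∧
    ¬ col (third p x) a ∧ ¬ col (third p x) b ∧ ¬ col (third p x) c :=
  stmt15_general col third hS a b c x y z p q r hπ hπ' hpx
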